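/- arXiv:math/0104094 — 3 statements merged into one kernel-verified Lean document; each statement's English description precedes it below -/
import Mathlib

section
/- For every dimension n ≥ 1 there exists a natural number N, depending only on n, such that for every integer k there exist sets A¹, …, A^N ⊆ ℝⁿ and vectors h_1, …, h_N ∈ ℝⁿ with the properties: (i) 2^{−k} ≤ |h_j| ≤ 2^{−k+1} for each j; (ii) the union A¹ ∪ … ∪ A^N contains the dyadic annulus Q_{2^{k+1}} \ Q_{2^k}; and (iii) |e^{2πi λ·h_j} − 1| ≥ 1 for every λ ∈ A^j and every j. -/
open MeasureTheory Complex Set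

/-- `e^{-2πi x·ξ}` on `ℝⁿ`. -/
noncomputable def expFour {n : ℕ} (ξ x : EuclideanSpace ℝ (Fin n)) : ℂ :=
  Complex.exp (-2 * Real.pi * Complex.I * ((inner ℝ x ξ : ℝ) : ℂ))

/-- `F_D g (ξ) = ∫_D e^{-2πi x·ξ} g(x) dx`. -/
noncomputable def fourierD {n : ℕ} (D : Set (EuclideanSpace ℝ (Fin n)))
    (g : EuclideanSpace ℝ (Fin n) → ℂ) (ξ : EuclideanSpace ℝ (Fin n)) : ℂ :=
  ∫ x in D, g x * expFour ξ x

/-- Fourier transform of the characteristic function of `S`. -/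
noncomputable def chiHat {n : ℕ} (S : Set (EuclideanSpace ℝ (Fin n)))
    (ξ : EuclideanSpace ℝ (Fin n)) : ℂ :=
  ∫ x in S, expFour ξ x

/-- `E_Λ` is a frame of exponentials for `L²(D)` with frame constants `A ≤ B`. -/
def IsExpFrame {n : ℕ} (D Λ : Set (EuclideanSpace ℝ (Fin n))) (A B : ℝ) : Prop :=
  ∀ f : EuclideanSpace ℝ (Fin n) → ℂ, MemLp f 2 (volume.restrict D) →
    A * ∫ x in D, ‖f x‖ ^ 2 ≤ ∑' l : Λ, ‖fourierD D f l‖ ^ 2 ∧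
    ∑' l : Λ, ‖fourierD D f l‖ ^ 2 ≤ B * ∫ x in D, ‖f x‖ ^ 2

/-- The closed cube of sidelength `2R` centered at `μ`. -/
def cube {n : ℕ} (μ : EuclideanSpace ℝ (Fin n)) (R : ℝ) :
    Set (EuclideanSpace ℝ (Fin n)) :=
  {x | ∀ i, |x i - μ i| ≤ R}


lemma sin_ge_half {t : ℝ} (h1 : 1/6 ≤ t) (h2 : t ≤ 5/6) :
    1/2 ≤ Real.sin (Real.pi * t) := by
  have hpi := Real.pi_pos
  have main : ∀ s : ℝ, 1/6 ≤ s → s ≤ 1/2 → 1/2 ≤ Real.sin (Real.pi * s) := by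
    intro s hs1 hs2
    rw [← Real.sin_pi_div_six]
    apply Real.strictMonoOn_sin.monotoneOn
    · constructor <;> nlinarith
    · constructor <;> nlinarith
    · nlinarith
  rcases le_total t (1/2) with h | h
  · exact main t h1 h
  · have : Real.sin (Real.pi * t) = Real.sin (Real.pi * (1 - t)) := by
      rw [show Real.pi * (1 - t) = Real.pi - Real.pi * t by ring, Real.sin_pi_sub]
    rw [this]
    exact main (1 - t) (by linarith) (by linarith)

lemma norm_exp_two_pi (θ : ℝ) :
    ‖Complex.exp (2 * Real.pi * Complex.I * (θ : ℂ)) - 1‖ = 2 * |Real.sin (Real.pi * θ)| := by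
  have h : (2 * (Real.pi:ℂ) * Complex.I * (θ:ℂ)) = ((2 * Real.pi * θ : ℝ) : ℂ) * Complex.I := by
    push_cast; ring
  rw [h, Complex.exp_mul_I, ← Complex.ofReal_cos, ← Complex.ofReal_sin]
  set c := Real.cos (2 * Real.pi * θ) with hc
  set s := Real.sin (2 * Real.pi * θ) with hs
  have hre : ((c:ℂ) + (s:ℂ) * Complex.I - 1).re = c - 1 := by simp
  have him : ((c:ℂ) + (s:ℂ) * Complex.I - 1).im = s := by simp
  rw [Complex.norm_def, Complex.normSq_apply, hre, him]
  have hcos : c = 1 - 2 * Real.sin (Real.pi * θ) ^ 2 := by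
    have h2 : (2 : ℝ) * Real.pi * θ = 2 * (Real.pi * θ) := by ring
    rw [hc, h2, Real.cos_two_mul', ← Real.sin_sq_add_cos_sq (Real.pi * θ)]
    ring
  have hsq : (c - 1) * (c - 1) + s * s = (2 * |Real.sin (Real.pi * θ)|) ^ 2 := by
    have h1 : s * s = 1 - c * c := by
      have := Real.sin_sq_add_cos_sq (2 * Real.pi * θ)
      nlinarith [this]
    rw [h1, hcos]
    rw [show (2 * |Real.sin (Real.pi * θ)|) ^ 2 = 4 * |Real.sin (Real.pi * θ)| ^ 2 by ring,
      _root_.sq_abs]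
    ring
  rw [hsq, Real.sqrt_sq (by positivity)]

lemma key_combinatorial {u : ℝ} (h1 : 1 < u) (h2 : u ≤ 2) :
    ∃ m : ℕ, m ≤ 6 ∧ ∃ j : ℤ, (j:ℝ) + 1/6 ≤ (1 + m/6) * u ∧ (1 + m/6) * u ≤ (j:ℝ) + 5/6 := by
  classical
  set j0 : ℤ := round u with hj0
  have hru : |u - (j0:ℝ)| ≤ 1/2 := abs_sub_round u
  by_cases hgood : 1/6 ≤ |u - (j0:ℝ)|
  · refine ⟨0, by norm_num, ?_⟩
    rcases abs_cases (u - (j0:ℝ)) with ⟨he, _⟩ | ⟨he, _⟩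
    · exact ⟨j0, by push_cast; nlinarith [abs_le.mp hru], by push_cast; nlinarith [abs_le.mp hru]⟩
    · refine ⟨j0 - 1, ?_, ?_⟩ <;> push_cast <;> nlinarith [abs_le.mp hru]
  · push_neg at hgood
    have hb := abs_lt.mp hgood
    have P6 : (j0:ℝ) + 1/6 ≤ (1 + (6:ℕ)/6) * u := by push_cast; nlinarith
    have hP : ∃ m : ℕ, (j0:ℝ) + 1/6 ≤ (1 + (m:ℝ)/6) * u := ⟨6, by exact_mod_cast P6⟩
    let m := Nat.find hP
    have hm : (j0:ℝ) + 1/6 ≤ (1 + (m:ℝ)/6) * u := Nat.find_spec hP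
    have hm6 : m ≤ 6 := Nat.find_le (by exact_mod_cast P6)
    have hm0 : m ≠ 0 := by
      intro h0
      have := hm
      rw [h0] at this
      push_cast at this
      nlinarith
    have hprev : ¬ ((j0:ℝ) + 1/6 ≤ (1 + ((m - 1 : ℕ):ℝ)/6) * u) :=
      Nat.find_min hP (Nat.sub_lt (Nat.pos_of_ne_zero hm0) one_pos)
    push_neg at hprev
    have hcast : ((m - 1 : ℕ):ℝ) = (m:ℝ) - 1 := by
      have := Nat.pos_of_ne_zero hm0
      push_cast [Nat.cast_sub this]; ring
    rw [hcast] at hprev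
    refine ⟨m, hm6, j0, hm, ?_⟩
    nlinarith

/-- the dyadic annulus `Q_{2^{k+1}} \ Q_{2^k}` can be covered by `N = N(n)`
sets `A^j`, each coming with a vector `h_j` of norm between `2^{-k}` and `2^{-k+1}`,
so that `|e^{2πi λ·h_j} − 1| ≥ 1` on `A^j`. -/
theorem annulus_cover (n : ℕ) (hn : 1 ≤ n) :
    ∃ N : ℕ, ∀ k : ℤ,
      ∃ (A : Fin N → Set (EuclideanSpace ℝ (Fin n)))
        (h : Fin N → EuclideanSpace ℝ (Fin n)),
        (∀ j, (2 : ℝ) ^ (-k) ≤ ‖h j‖ ∧ ‖h j‖ ≤ (2 : ℝ) ^ (-k + 1)) ∧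
        (cube 0 ((2 : ℝ) ^ (k + 1)) \ cube 0 ((2 : ℝ) ^ k) ⊆ ⋃ j, A j) ∧
        (∀ j, ∀ l ∈ A j,
          1 ≤ ‖Complex.exp (2 * Real.pi * Complex.I * ((inner ℝ l (h j) : ℝ) : ℂ)) - 1‖) := by
  refine ⟨7 * n, fun k => ?_⟩
  have h2k : (0:ℝ) < (2:ℝ) ^ (-k) := by positivity
  have h2k' : (0:ℝ) < (2:ℝ) ^ k := by positivity
  have hidx : ∀ j : Fin (7 * n), j.val / 7 < n := by
    intro j
    have := j.isLt
    omega
  set c : Fin (7 * n) → ℝ := fun j => (1 + ((j.val % 7 : ℕ) : ℝ) / 6) * (2:ℝ) ^ (-k) with hcdef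
  set h : Fin (7 * n) → EuclideanSpace ℝ (Fin n) :=
    fun j => c j • EuclideanSpace.single ⟨j.val / 7, hidx j⟩ (1:ℝ) with hhdef
  have hcpos : ∀ j, 0 < c j := by
    intro j
    have : (0:ℝ) ≤ ((j.val % 7 : ℕ) : ℝ) / 6 := by positivity
    have : (0:ℝ) < 1 + ((j.val % 7 : ℕ) : ℝ) / 6 := by linarith
    exact mul_pos this h2k
  have hnorm : ∀ j, ‖h j‖ = c j := by
    intro j
    rw [hhdef]
    simp only [norm_smul, EuclideanSpace.norm_single, norm_one, mul_one, Real.norm_eq_abs]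
    exact abs_of_pos (hcpos j)
  have hinner : ∀ (j : Fin (7 * n)) (l : EuclideanSpace ℝ (Fin n)),
      (inner ℝ l (h j) : ℝ) = c j * l ⟨j.val / 7, hidx j⟩ := by
    intro j l
    rw [hhdef]
    simp only [real_inner_smul_right, EuclideanSpace.inner_single_right]
    simp
  refine ⟨fun j => {l | 1 ≤ ‖Complex.exp (2 * Real.pi * Complex.I *
      ((inner ℝ l (h j) : ℝ) : ℂ)) - 1‖}, h, ?_, ?_, fun j l hl => hl⟩
  · intro j
    have hm7 : (j.val % 7 : ℕ) ≤ 6 := by omega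
    have hm7' : ((j.val % 7 : ℕ) : ℝ) ≤ 6 := by exact_mod_cast hm7
    have hm0 : (0:ℝ) ≤ ((j.val % 7 : ℕ) : ℝ) := by positivity
    rw [hnorm j]
    have hcj : c j = (1 + ((j.val % 7 : ℕ) : ℝ) / 6) * (2:ℝ) ^ (-k) := rfl
    constructor
    · rw [hcj]
      nlinarith
    · have hle : (1 + ((j.val % 7 : ℕ) : ℝ) / 6) ≤ 2 := by linarith
      have h2 : (2:ℝ) ^ (-k + 1) = (2:ℝ) ^ (-k) * 2 := by
        rw [zpow_add₀ (by norm_num : (2:ℝ) ≠ 0)]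
        norm_num
      rw [h2, hcj]
      nlinarith
  · intro l hl
    obtain ⟨hl1, hl2⟩ := hl
    simp only [cube, mem_setOf_eq] at hl1 hl2
    push_neg at hl2
    obtain ⟨i, hi⟩ := hl2
    have hzero : ∀ i : Fin n, (0 : EuclideanSpace ℝ (Fin n)) i = 0 := fun _ => rfl
    rw [hzero, sub_zero] at hi
    have hi1 : ∀ i', |l i'| ≤ (2:ℝ) ^ (k + 1) := by
      intro i'
      have := hl1 i'
      rwa [hzero, sub_zero] at this
    set u : ℝ := |l i| * (2:ℝ) ^ (-k) with hudef
    have hu1 : 1 < u := by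
      have : (2:ℝ) ^ k * (2:ℝ) ^ (-k) < |l i| * (2:ℝ) ^ (-k) :=
        mul_lt_mul_of_pos_right hi h2k
      rwa [← zpow_add₀ (by norm_num : (2:ℝ) ≠ 0), add_neg_cancel, zpow_zero] at this
    have hu2 : u ≤ 2 := by
      have h1' : |l i| ≤ (2:ℝ) ^ (k + 1) := hi1 i
      have : |l i| * (2:ℝ) ^ (-k) ≤ (2:ℝ) ^ (k + 1) * (2:ℝ) ^ (-k) :=
        mul_le_mul_of_nonneg_right h1' h2k.le
      rwa [← zpow_add₀ (by norm_num : (2:ℝ) ≠ 0), show k + 1 + -k = 1 by ring,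
        zpow_one] at this
    obtain ⟨m, hm6, j, hj1, hj2⟩ := key_combinatorial hu1 hu2
    have hjdxlt : 7 * i.val + m < 7 * n := by
      have := i.isLt
      omega
    set jdx : Fin (7 * n) := ⟨7 * i.val + m, hjdxlt⟩ with hjdx
    have hmod : (jdx.val % 7 : ℕ) = m := by simp [hjdx]; omega
    have hdiv : jdx.val / 7 = i.val := by simp [hjdx]; omega
    refine mem_iUnion.mpr ⟨jdx, ?_⟩
    simp only [mem_setOf_eq]
    have hifin : (⟨jdx.val / 7, hidx jdx⟩ : Fin n) = i := Fin.ext hdiv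
    have hθ : (inner ℝ l (h jdx) : ℝ) = c jdx * l i := by rw [hinner jdx l, hifin]
    set θ : ℝ := c jdx * l i with hθdef
    rw [hθ, norm_exp_two_pi θ]
    -- |θ| = (1 + m/6) * u
    have habsθ : |θ| = (1 + (m:ℝ)/6) * u := by
      rw [hθdef, abs_mul, abs_of_pos (hcpos jdx), hcdef]
      simp only [hmod]
      rw [hudef]
      ring
    have hsin : |Real.sin (Real.pi * θ)| = |Real.sin (Real.pi * |θ|)| := by
      rcases abs_cases θ with ⟨he, _⟩ | ⟨he, _⟩
      · rw [he]
      · rw [he, show Real.pi * -θ = -(Real.pi * θ) by ring, Real.sin_neg, abs_neg]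
    have hshift : |Real.sin (Real.pi * |θ|)| = |Real.sin (Real.pi * (|θ| - (j:ℝ)))| := by
      have : Real.pi * |θ| = Real.pi * (|θ| - (j:ℝ)) + (j:ℝ) * Real.pi := by ring
      have hone : |((-1:ℝ)) ^ j| = 1 := by
        rcases Int.even_or_odd j with he | ho
        · rw [he.neg_one_zpow]; norm_num
        · rw [Odd.neg_one_zpow ho]; norm_num
      rw [this, Real.sin_add_int_mul_pi, abs_mul, hone, one_mul]
    have hrange1 : 1/6 ≤ |θ| - (j:ℝ) := by rw [habsθ]; linarith
    have hrange2 : |θ| - (j:ℝ) ≤ 5/6 := by rw [habsθ]; linarith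
    have := sin_ge_half hrange1 hrange2
    have habs : 1/2 ≤ |Real.sin (Real.pi * (|θ| - (j:ℝ)))| :=
      le_trans this (le_abs_self _)
    rw [hsin, hshift] at *
    linarith [habs]
end

section
/- Let D ⊆ ℝⁿ be a set of finite Lebesgue measure and let Λ ⊆ ℝⁿ be a countable set such that E_Λ is a frame of exponentials for L²(D) with frame constants 0 < A ≤ B. Then for every h ∈ ℝⁿ, Σ_{λ∈Λ} |χ̂_{D ∩ (D+h)}(λ)|² · |e^{2πi λ·h} − 1|² ≤ B ∫_D |χ_D(x+h) − χ_D(x−h)|² dx, where χ̂_S(λ) = ∫_{ℝⁿ} e^{−2πi x·λ} χ_S(x) dx and D + h = {x + h : x ∈ D}. -/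
open MeasureTheory Complex Set

/-- `Σ_{λ∈Λ} |χ̂_{D∩(D+h)}(λ)|² |e^{2πi λ·h} − 1|²
  ≤ B ∫_D |χ_D(x+h) − χ_D(x−h)|² dx`. -/
theorem frame_upper_bound_phase (n : ℕ) (D Λ : Set (EuclideanSpace ℝ (Fin n)))
    (A B : ℝ) (hD : MeasurableSet D) (hvol : volume D ≠ ⊤) (hΛ : Λ.Countable)
    (hA : 0 < A) (hAB : A ≤ B) (hframe : IsExpFrame D Λ A B)
    (h : EuclideanSpace ℝ (Fin n)) :
    ∑' l : Λ, ‖chiHat (D ∩ ((· + h) '' D)) l‖ ^ 2 *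
        ‖Complex.exp (2 * Real.pi * Complex.I * ((inner ℝ (l : EuclideanSpace ℝ (Fin n)) h : ℝ) : ℂ)) - 1‖ ^ 2 ≤
      B * ∫ x in D, |Set.indicator D (fun _ => (1 : ℝ)) (x + h) -
          Set.indicator D (fun _ => (1 : ℝ)) (x - h)| ^ 2 := by
  classical
  haveI hfin : IsFiniteMeasure (volume.restrict D) :=
    ⟨by rwa [Measure.restrict_apply_univ, lt_top_iff_ne_top]⟩
  set f : EuclideanSpace ℝ (Fin n) → ℂ := fun x =>
    ((D.indicator (fun _ => (1 : ℝ)) (x + h) - D.indicator (fun _ => (1 : ℝ)) (x - h) : ℝ) : ℂ)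
    with hfdef
  have himg : ((· + h) '' D) = (fun x => x - h) ⁻¹' D := by
    ext x
    simp only [Set.mem_image, Set.mem_preimage]
    constructor
    · rintro ⟨y, hy, rfl⟩; simpa using hy
    · intro hx; exact ⟨x - h, hx, by abel⟩
  have hmeas : Measurable f := by
    apply Complex.measurable_ofReal.comp
    exact ((measurable_const.indicator hD).comp (measurable_add_const h)).sub
      ((measurable_const.indicator hD).comp (measurable_sub_const h))
  have hmemf : MemLp f 2 (volume.restrict D) := by
    refine MemLp.of_bound hmeas.aestronglyMeasurable 2 ?_
    filter_upwards with x
    rw [hfdef]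
    simp only [Complex.norm_real, Real.norm_eq_abs]
    by_cases h1 : x + h ∈ D <;> by_cases h2 : x - h ∈ D <;>
      simp [Set.indicator_of_mem, Set.indicator_of_notMem, h1, h2] <;> norm_num
  obtain ⟨-, hupper⟩ := hframe f hmemf
  -- norm of expFour is 1
  have hnorm1 : ∀ (l x : EuclideanSpace ℝ (Fin n)), ‖expFour l x‖ = 1 := by
    intro l x
    simp only [expFour, Complex.norm_exp]
    norm_num
  have hcont : ∀ l : EuclideanSpace ℝ (Fin n), Continuous (expFour l) := by
    intro l
    unfold expFour
    exact Complex.continuous_exp.comp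
      (continuous_const.mul (Complex.continuous_ofReal.comp
        (continuous_id.inner continuous_const)))
  have hint : ∀ (l : EuclideanSpace ℝ (Fin n)) (S : Set (EuclideanSpace ℝ (Fin n))),
      MeasurableSet S → Integrable (S.indicator (expFour l)) (volume.restrict D) := by
    intro l S hS
    refine (integrable_const (1 : ℝ)).mono'
      (((hcont l).measurable.indicator hS).aestronglyMeasurable) ?_
    filter_upwards with x
    by_cases hx : x ∈ S <;> simp [hx, hnorm1]
  -- key pointwise identity for the Fourier coefficient
  have hterm : ∀ l : EuclideanSpace ℝ (Fin n),
      fourierD D f l = chiHat (D ∩ ((· + h) '' D)) l *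
        (Complex.exp (2 * Real.pi * Complex.I * ((inner ℝ l h : ℝ) : ℂ)) - 1) := by
    intro l
    set e := expFour l with he
    set c : ℂ := Complex.exp (2 * Real.pi * Complex.I * ((inner ℝ l h : ℝ) : ℂ)) with hc
    have hpt : ∀ x, f x * e x =
        ((fun x => x + h) ⁻¹' D).indicator e x - ((fun x => x - h) ⁻¹' D).indicator e x := by
      intro x
      by_cases h1 : x + h ∈ D <;> by_cases h2 : x - h ∈ D <;>
        simp [hfdef, Set.indicator_of_mem, Set.indicator_of_notMem, h1, h2,
          Set.mem_preimage] <;> ring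
    have hsplit : fourierD D f l =
        (∫ x in D, ((fun x => x + h) ⁻¹' D).indicator e x) -
        (∫ x in D, ((fun x => x - h) ⁻¹' D).indicator e x) := by
      rw [fourierD, ← integral_sub (hint l _ (hD.preimage (measurable_add_const h)))
        (hint l _ (hD.preimage (measurable_sub_const h)))]
      exact integral_congr_ae (Filter.Eventually.of_forall hpt)
    rw [hsplit, setIntegral_indicator (hD.preimage (measurable_add_const h)),
      setIntegral_indicator (hD.preimage (measurable_sub_const h))]
    have h2nd : (∫ x in D ∩ ((fun x => x - h) ⁻¹' D), e x) = chiHat (D ∩ ((· + h) '' D)) l := by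
      rw [chiHat, himg]
    have hsetEq : D ∩ ((fun x => x + h) ⁻¹' D) =
        (fun x => x + h) ⁻¹' ((D ∩ ((· + h) '' D))) := by
      ext x
      simp only [Set.mem_inter_iff, Set.mem_preimage, himg, add_sub_cancel_right]
      tauto
    have hphase : ∀ y : EuclideanSpace ℝ (Fin n), e (y - h) = c * e y := by
      intro y
      rw [he, hc]
      simp only [expFour]
      rw [← Complex.exp_add]
      congr 1
      have : (inner ℝ (y - h) l : ℝ) = (inner ℝ y l : ℝ) - (inner ℝ h l : ℝ) := inner_sub_left _ _ _
      rw [this, real_inner_comm l h]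
      push_cast
      ring
    have h1st : (∫ x in D ∩ ((fun x => x + h) ⁻¹' D), e x) =
        c * chiHat (D ∩ ((· + h) '' D)) l := by
      rw [hsetEq]
      have hsub := (measurePreserving_add_right (volume : Measure (EuclideanSpace ℝ (Fin n))) h).setIntegral_preimage_emb
        (MeasurableEquiv.addRight h).measurableEmbedding
        (fun y => e (y - h)) (D ∩ ((· + h) '' D))
      simp only [add_sub_cancel_right] at hsub
      rw [show (fun x => x + h) = (MeasurableEquiv.addRight h : EuclideanSpace ℝ (Fin n) → EuclideanSpace ℝ (Fin n)) from rfl] at hsub ⊢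
      rw [hsub]
      simp only [hphase]
      rw [integral_const_mul, chiHat]
    rw [h1st, h2nd]
    ring
  -- convert the sum
  have hsum : (∑' l : Λ, ‖chiHat (D ∩ ((· + h) '' D)) l‖ ^ 2 *
      ‖Complex.exp (2 * Real.pi * Complex.I * ((inner ℝ (l : EuclideanSpace ℝ (Fin n)) h : ℝ) : ℂ)) - 1‖ ^ 2)
      = ∑' l : Λ, ‖fourierD D f l‖ ^ 2 := by
    refine tsum_congr fun l => ?_
    rw [hterm l, norm_mul, mul_pow]
  have hintg : (∫ x in D, ‖f x‖ ^ 2) =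
      ∫ x in D, |Set.indicator D (fun _ => (1 : ℝ)) (x + h) -
        Set.indicator D (fun _ => (1 : ℝ)) (x - h)| ^ 2 := by
    refine integral_congr_ae (Filter.Eventually.of_forall fun x => ?_)
    rw [hfdef]
    simp only [Complex.norm_real, Real.norm_eq_abs]
  rw [hsum]
  rw [hintg] at hupper
  exact hupper
end

section
/- Let m be a Borel probability measure on ℝ satisfying the self-similarity relation ∫ f(t) dm(t) = (1/2) ∫ f(t/4) dm(t) + (1/2) ∫ f((t+2)/4) dm(t) for every bounded continuous function f : ℝ → ℂ. Then, for every t ∈ ℝ, the Fourier transform of m satisfies m̂(t) = e^{πi (2/3) t} · Π_{j=0}^∞ cos(π t / (2 · 4^j)), where m̂(t) = ∫ e^{2πi t x} dm(x) and the infinite product is the limit of the partial products Π_{j=0}^J cos(π t / (2 · 4^j)) as J → ∞. -/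
open MeasureTheory Filter

noncomputable def phi (m : Measure ℝ) (s : ℝ) : ℂ :=
  ∫ x, Complex.exp (2 * Real.pi * Complex.I * s * x) ∂m

lemma norm_exp_twopi (s x : ℝ) : ‖Complex.exp (2 * Real.pi * Complex.I * s * x)‖ = 1 := by
  rw [Complex.norm_exp]
  simp

lemma cont_exp_twopi (s : ℝ) : Continuous (fun x : ℝ => Complex.exp (2 * Real.pi * Complex.I * s * x)) := by
  fun_prop

lemma exp_cos_aux (z : ℂ) :
    Complex.exp (z * Complex.I) * Complex.cos z = (1 + Complex.exp (2 * z * Complex.I)) / 2 := by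
  have h1 : Complex.exp (z * Complex.I) * Complex.exp (z * Complex.I)
      = Complex.exp (2 * z * Complex.I) := by rw [← Complex.exp_add]; ring_nf
  have h2 : Complex.exp (z * Complex.I) * Complex.exp (-z * Complex.I) = 1 := by
    rw [← Complex.exp_add]; ring_nf; exact Complex.exp_zero
  rw [Complex.cos]
  linear_combination (h1 + h2) / 2

lemma integrable_exp_twopi (m : Measure ℝ) [IsProbabilityMeasure m] (s : ℝ) :
    Integrable (fun x : ℝ => Complex.exp (2 * Real.pi * Complex.I * s * x)) m := by
  refine Integrable.mono' (integrable_const 1) (cont_exp_twopi s).aestronglyMeasurable ?_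
  filter_upwards with x
  rw [norm_exp_twopi]

lemma phi_step (m : Measure ℝ) [IsProbabilityMeasure m]
    (hself : ∀ f : ℝ → ℂ, Continuous f → (∃ M : ℝ, ∀ x, ‖f x‖ ≤ M) →
      ∫ t, f t ∂m =
        (1 / 2 : ℂ) * ∫ t, f (t / 4) ∂m + (1 / 2 : ℂ) * ∫ t, f ((t + 2) / 4) ∂m)
    (s : ℝ) :
    phi m s = Complex.exp (Real.pi * s / 2 * Complex.I) *
      (Real.cos (Real.pi * s / 2) : ℂ) * phi m (s / 4) := by
  have key := hself (fun x : ℝ => Complex.exp (2 * Real.pi * Complex.I * s * x))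
    (cont_exp_twopi s) ⟨1, fun x => le_of_eq (norm_exp_twopi s x)⟩
  have e1 : ∀ x : ℝ, Complex.exp (2 * Real.pi * Complex.I * s * ((x : ℝ) / 4 : ℝ))
      = Complex.exp (2 * Real.pi * Complex.I * (s / 4 : ℝ) * x) := by
    intro x; congr 1; push_cast; ring
  have e2 : ∀ x : ℝ, Complex.exp (2 * Real.pi * Complex.I * s * (((x : ℝ) + 2) / 4 : ℝ))
      = Complex.exp (Real.pi * s * Complex.I) *
        Complex.exp (2 * Real.pi * Complex.I * (s / 4 : ℝ) * x) := by
    intro x; rw [← Complex.exp_add]; congr 1; push_cast; ring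
  have h1 : (∫ x, Complex.exp (2 * Real.pi * Complex.I * s * ((x : ℝ) / 4 : ℝ)) ∂m)
      = phi m (s / 4) := by
    unfold phi
    exact integral_congr_ae (Filter.Eventually.of_forall fun x => e1 x)
  have h2 : (∫ x, Complex.exp (2 * Real.pi * Complex.I * s * (((x : ℝ) + 2) / 4 : ℝ)) ∂m)
      = Complex.exp (Real.pi * s * Complex.I) * phi m (s / 4) := by
    unfold phi
    rw [integral_congr_ae (Filter.Eventually.of_forall fun x => e2 x)]
    exact integral_const_mul _ _
  have hphi : phi m s = (1 / 2 : ℂ) * phi m (s / 4)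
      + (1 / 2 : ℂ) * (Complex.exp (Real.pi * s * Complex.I) * phi m (s / 4)) := by
    unfold phi at *
    rw [key, h1, h2]
  rw [hphi]
  have := exp_cos_aux ((Real.pi * s / 2 : ℝ) : ℂ)
  have harg : (2 : ℂ) * ((Real.pi * s / 2 : ℝ) : ℂ) * Complex.I
      = Real.pi * s * Complex.I := by push_cast; ring
  rw [harg] at this
  rw [Complex.ofReal_cos] at *
  push_cast at this ⊢
  rw [show ((Real.pi : ℂ) * s / 2 * Complex.I) = ((Real.pi * s / 2 : ℂ)) * Complex.I by ring]
  rw [this]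
  ring

lemma phi_prod (m : Measure ℝ) [IsProbabilityMeasure m]
    (hself : ∀ f : ℝ → ℂ, Continuous f → (∃ M : ℝ, ∀ x, ‖f x‖ ≤ M) →
      ∫ t, f t ∂m =
        (1 / 2 : ℂ) * ∫ t, f (t / 4) ∂m + (1 / 2 : ℂ) * ∫ t, f ((t + 2) / 4) ∂m)
    (t : ℝ) : ∀ J : ℕ,
    phi m t = Complex.exp (Real.pi * Complex.I * t *
        ((∑ j ∈ Finset.range (J + 1), (1 / (2 * 4 ^ j) : ℝ)) : ℝ)) *
      (∏ j ∈ Finset.range (J + 1), (Real.cos (Real.pi * t / (2 * 4 ^ j)) : ℂ)) *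
      phi m (t / 4 ^ (J + 1)) := by
  intro J
  induction J with
  | zero =>
    have e1 : ((1 : ℝ) / (2 * 4 ^ 0)) = 1 / 2 := by norm_num
    have e2 : Real.pi * t / (2 * 4 ^ 0) = Real.pi * t / 2 := by norm_num
    rw [phi_step m hself t, Finset.sum_range_one, Finset.prod_range_one, pow_one, e1, e2]
    congr 2
    push_cast; ring
  | succ n ih =>
    have h := phi_step m hself (t / 4 ^ (n + 1))
    have harg1 : Real.pi * (t / 4 ^ (n + 1)) / 2 = Real.pi * t / (2 * 4 ^ (n + 1)) := by
      ring
    have harg2 : t / 4 ^ (n + 1) / 4 = t / 4 ^ (n + 1 + 1) := by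
      rw [div_div, ← pow_succ]
    have harg3 : (Real.pi : ℂ) * ((t / 4 ^ (n + 1) : ℝ) : ℂ) / 2 * Complex.I
        = (Real.pi : ℂ) * Complex.I * (t : ℂ) * (((1 : ℝ) / (2 * 4 ^ (n + 1)) : ℝ) : ℂ) := by
      push_cast; ring
    rw [harg1, harg2, harg3] at h
    rw [ih, h]
    conv_rhs => rw [Finset.sum_range_succ, Finset.prod_range_succ]
    rw [Complex.ofReal_add, mul_add, Complex.exp_add]
    push_cast
    ring_nf

lemma phi_zero (m : Measure ℝ) [IsProbabilityMeasure m] : phi m 0 = 1 := by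
  unfold phi
  simp

lemma phi_tendsto_one (m : Measure ℝ) [IsProbabilityMeasure m] (t : ℝ) :
    Tendsto (fun J : ℕ => phi m (t / 4 ^ (J + 1))) atTop (nhds 1) := by
  have hu : Tendsto (fun J : ℕ => t / 4 ^ (J + 1)) atTop (nhds 0) := by
    have h4 : Tendsto (fun J : ℕ => ((1 : ℝ) / 4) ^ (J + 1)) atTop (nhds 0) :=
      (tendsto_pow_atTop_nhds_zero_of_lt_one (by norm_num) (by norm_num)).comp
        (tendsto_add_atTop_nat 1)
    have := h4.const_mul t
    simp only [mul_zero] at this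
    refine this.congr fun J => ?_
    rw [div_pow, one_pow, mul_one_div]
  have hlim : ∀ x : ℝ, Tendsto (fun J : ℕ =>
      Complex.exp (2 * Real.pi * Complex.I * (t / 4 ^ (J + 1) : ℝ) * x)) atTop (nhds 1) := by
    intro x
    have hcont : Continuous fun s : ℝ => Complex.exp (2 * Real.pi * Complex.I * s * x) := by
      fun_prop
    have := (hcont.tendsto 0).comp hu
    simp only [Complex.ofReal_zero, mul_zero, zero_mul, Complex.exp_zero] at this
    exact this
  have main := MeasureTheory.tendsto_integral_of_dominated_convergence
    (F := fun (J : ℕ) (x : ℝ) => Complex.exp (2 * Real.pi * Complex.I * (t / 4 ^ (J + 1) : ℝ) * x))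
    (f := fun _ : ℝ => (1 : ℂ)) (bound := fun _ => (1 : ℝ))
    (μ := m)
    (fun n => (cont_exp_twopi _).aestronglyMeasurable)
    (integrable_const 1)
    (fun n => Filter.Eventually.of_forall fun x => le_of_eq (norm_exp_twopi _ x))
    (Filter.Eventually.of_forall fun x => hlim x)
  simpa [phi] using main

lemma sum_tendsto :
    Tendsto (fun J : ℕ => ∑ j ∈ Finset.range (J + 1), (1 / (2 * 4 ^ j) : ℝ))
      atTop (nhds (2 / 3)) := by
  have hgeo : HasSum (fun j : ℕ => (1 / 2 : ℝ) * (1 / 4) ^ j) ((1 / 2) * (1 - 1 / 4)⁻¹) :=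
    (hasSum_geometric_of_lt_one (by norm_num) (by norm_num)).mul_left _
  have hgeo2 : HasSum (fun j : ℕ => (1 / (2 * 4 ^ j) : ℝ)) (2 / 3) := by
    have : ((1 / 2 : ℝ) * (1 - 1 / 4)⁻¹) = 2 / 3 := by norm_num
    rw [this] at hgeo
    refine hgeo.congr_fun fun j => ?_
    rw [div_pow, one_pow]
    field_simp
  exact hgeo2.tendsto_sum_nat.comp (tendsto_add_atTop_nat 1)

/-- the Fourier transform of the self-similar Cantor measure `m`
satisfying `∫ f dm = ½∫ f(t/4) dm + ½∫ f((t+2)/4) dm` is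
`m̂(t) = e^{πi(2/3)t} Π_{j=0}^∞ cos(πt/(2·4^j))`, the infinite product being the
limit of partial products. -/
theorem cantor_measure_fourier (m : Measure ℝ) [IsProbabilityMeasure m]
    (hself : ∀ f : ℝ → ℂ, Continuous f → (∃ M : ℝ, ∀ x, ‖f x‖ ≤ M) →
      ∫ t, f t ∂m =
        (1 / 2 : ℂ) * ∫ t, f (t / 4) ∂m + (1 / 2 : ℂ) * ∫ t, f ((t + 2) / 4) ∂m) :
    ∀ t : ℝ,
      Tendsto
        (fun J : ℕ => Complex.exp (Real.pi * Complex.I * (2 / 3) * t) *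
          ∏ j ∈ Finset.range (J + 1), (Real.cos (Real.pi * t / (2 * 4 ^ j)) : ℂ))
        atTop (nhds (∫ x, Complex.exp (2 * Real.pi * Complex.I * t * x) ∂m)) := by
  intro t
  have hint : (∫ x, Complex.exp (2 * Real.pi * Complex.I * t * x) ∂m) = phi m t := rfl
  rw [hint]
  set c : ℕ → ℝ := fun J => ∑ j ∈ Finset.range (J + 1), (1 / (2 * 4 ^ j) : ℝ) with hc
  set P : ℕ → ℂ := fun J =>
    ∏ j ∈ Finset.range (J + 1), (Real.cos (Real.pi * t / (2 * 4 ^ j)) : ℂ) with hP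
  set a : ℕ → ℂ := fun J => Complex.exp (Real.pi * Complex.I * (2 / 3) * t) * P J with ha
  have key : ∀ J : ℕ, a J * phi m (t / 4 ^ (J + 1))
      = Complex.exp ((Real.pi : ℂ) * Complex.I * t * (((2 / 3 - c J : ℝ)) : ℂ)) * phi m t := by
    intro J
    rw [phi_prod m hself t J]
    have hexp : Complex.exp ((Real.pi : ℂ) * Complex.I * t * (((2 / 3 - c J : ℝ)) : ℂ)) *
        Complex.exp ((Real.pi : ℂ) * Complex.I * t * ((c J : ℝ) : ℂ))
        = Complex.exp ((Real.pi : ℂ) * Complex.I * (2 / 3) * t) := by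
      rw [← Complex.exp_add]; congr 1; push_cast; ring
    simp only [ha, hP, hc]
    linear_combination
      (-((∏ j ∈ Finset.range (J + 1), (Real.cos (Real.pi * t / (2 * 4 ^ j)) : ℂ)) *
        phi m (t / 4 ^ (J + 1)))) * hexp
  have hφ := phi_tendsto_one m t
  have hc2 : Tendsto c atTop (nhds (2 / 3)) := sum_tendsto
  have hd : Tendsto (fun J => (2 / 3 : ℝ) - c J) atTop (nhds 0) := by
    have := (tendsto_const_nhds (x := (2 / 3 : ℝ)) (f := (atTop : Filter ℕ))).sub hc2
    simpa using this
  have hcont : Continuous fun r : ℝ => Complex.exp ((Real.pi : ℂ) * Complex.I * t * (r : ℂ)) := by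
    fun_prop
  have he : Tendsto (fun J =>
      Complex.exp ((Real.pi : ℂ) * Complex.I * t * (((2 / 3 - c J : ℝ)) : ℂ))) atTop (nhds 1) := by
    have := (hcont.tendsto 0).comp hd
    simp only [Complex.ofReal_zero, mul_zero, Complex.exp_zero] at this
    exact this
  have h1 : Tendsto (fun J => a J * phi m (t / 4 ^ (J + 1))) atTop (nhds (phi m t)) := by
    have := he.mul_const (phi m t)
    rw [one_mul] at this
    exact this.congr fun J => (key J).symm
  have hnorm : ∀ J, ‖a J‖ ≤ 1 := by
    intro J
    simp only [ha, hP]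
    rw [norm_mul]
    have hre : (↑Real.pi * Complex.I * (2 / 3) * (t : ℂ)) =
        ((Real.pi * (2 / 3) * t : ℝ) : ℂ) * Complex.I := by push_cast; ring
    have h1' : ‖Complex.exp (↑Real.pi * Complex.I * (2 / 3) * (t : ℂ))‖ = 1 := by
      rw [hre, Complex.norm_exp_ofReal_mul_I]
    rw [h1', one_mul, norm_prod]
    refine Finset.prod_le_one (fun j _ => (norm_nonneg _)) (fun j _ => ?_)
    rw [Complex.norm_real, Real.norm_eq_abs]
    exact Real.abs_cos_le_one _
  have h2 : Tendsto (fun J => a J * (1 - phi m (t / 4 ^ (J + 1)))) atTop (nhds 0) := by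
    have hb : Tendsto (fun J => ‖(1 : ℂ) - phi m (t / 4 ^ (J + 1))‖) atTop (nhds 0) := by
      have h := (tendsto_const_nhds (x := (1 : ℂ)) (f := atTop)).sub hφ
      rw [sub_self] at h
      simpa using h.norm
    refine squeeze_zero_norm (fun J => ?_) hb
    rw [norm_mul]
    calc ‖a J‖ * ‖1 - phi m (t / 4 ^ (J + 1))‖
        ≤ 1 * ‖1 - phi m (t / 4 ^ (J + 1))‖ :=
          mul_le_mul_of_nonneg_right (hnorm J) (norm_nonneg _)
      _ = _ := one_mul _
  have hfin := h1.add h2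
  rw [add_zero] at hfin
  exact hfin.congr fun J => by ring
end
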